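/- arXiv:2306.00523 — 3 statements merged into one kernel-verified Lean document; each statement's English description precedes it below -/
import Mathlib

section
/- Let d ≥ 2, Θ : [0,∞) → (0,∞) increasing, and ρ ∈ L¹(ℝ^d) ∩ Y^Θ_ul(ℝ^d) nonnegative. Then for all x, y ∈ ℝ^d, ∫_{ℝ^d} |K(x−z) − K(y−z)| ρ(z) dz ≤ C_d (‖ρ‖_{L¹} + ‖ρ‖_{Y^Θ_ul}) · φ_Θ(|x−y|), where φ_Θ(r) = r|log r|Θ(|log r|) for r ∈ (0, e^{−d−1}), φ_Θ(0) = 0, and φ_Θ(r) = e^{−d−1}(d+1)Θ(d+1) for r ≥ e^{−d−1}. -/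
open MeasureTheory Real Set Metric
open scoped ENNReal

/-- The uniformly-localized `L^p` norm: `‖f‖_{L^p_ul} = sup_x ‖f‖_{L^p(B_1(x))}`. -/
noncomputable def ulNorm {d : ℕ} (p : ℝ≥0∞) (f : EuclideanSpace ℝ (Fin d) → ℝ) : ℝ≥0∞ :=
  ⨆ x : EuclideanSpace ℝ (Fin d),
    eLpNorm f p (volume.restrict (Metric.ball x 1))

/-- The uniformly-localized Yudovich norm `‖f‖_{Y^Θ_ul} = sup_{p≥1} ‖f‖_{L^p_ul}/Θ(p)`. -/
noncomputable def yudNorm {d : ℕ} (Θ : ℝ → ℝ) (f : EuclideanSpace ℝ (Fin d) → ℝ) : ℝ≥0∞ :=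
  ⨆ p : Set.Ici (1 : ℝ), ulNorm (ENNReal.ofReal (p : ℝ)) f / ENNReal.ofReal (Θ p)

/-- The modulus of continuity `φ_Θ` associated to a growth function `Θ`. -/
noncomputable def phiTheta (d : ℕ) (Θ : ℝ → ℝ) (r : ℝ) : ℝ :=
  if r = 0 then 0
  else if r < Real.exp (-((d : ℝ) + 1)) then r * |Real.log r| * Θ |Real.log r|
  else Real.exp (-((d : ℝ) + 1)) * ((d : ℝ) + 1) * Θ ((d : ℝ) + 1)

/-!
Write `r = ‖x - y‖`. Hölder's inequality on a ball of radius `σ ≤ 1` bounds its `ρ`-mass by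
`Θ(p) σ^(d - d/p) ‖ρ‖_Y`; summing over dyadic shells gives
`∫_{B(c, s)} |c - z|^(1-d) ρ(z) dz ≲ Θ(p) s^(1 - d/p) ‖ρ‖_Y` for `p ≥ d + 1`. For `r ≥ e^(-d-1)`
this bound (with `s = 1`, `p = d + 1`) and `|K| ≤ 1` off the unit ball control each kernel
separately. For small `r` take `p = |log r|`, so that `r^(-d/p) = e^d`. On `B(x, 2r)` the kernels
are again bounded separately, giving `≲ r Θ(p)`. Off `B(x, 2r)` the kernel difference is
`≲ r |x - z|^(-d)`: each of the `≲ p` dyadic shells between radii `2r` and `1` contributes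
`≲ r Θ(p)`, and beyond the unit ball one pays `r ‖ρ‖_{L¹}`. Altogether the integral is
`≲ r p Θ(p) = φ_Θ(r)`.
-/

section RieszKernel

variable {E : Type*} [NormedAddCommGroup E] [NormedSpace ℝ E] {d : ℕ}

noncomputable def rieszKernel (d : ℕ) (z : E) : E := (‖z‖ ^ d)⁻¹ • z

lemma norm_rieszKernel (hd : 2 ≤ d) (z : E) : ‖rieszKernel d z‖ = (‖z‖ ^ (d - 1))⁻¹ := by
  obtain rfl | hz := eq_or_ne z 0
  · simp [rieszKernel, zero_pow (by omega : d - 1 ≠ 0)]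
  have hd' : d = d - 1 + 1 := by omega
  rw [rieszKernel, norm_smul, norm_inv, norm_pow, norm_norm, hd', pow_succ, Nat.add_sub_cancel]
  field_simp

lemma norm_rieszKernel_sub_le (hd : 1 ≤ d) {a b : E} {t : ℝ} (ht : 0 < t) (ha : t ≤ ‖a‖)
    (hb : t ≤ ‖b‖) : ‖rieszKernel d a - rieszKernel d b‖ ≤ (d + 1) * ‖a - b‖ / t ^ d := by
  wlog hab : ‖a‖ ≤ ‖b‖ generalizing a b
  · rw [norm_sub_rev, norm_sub_rev a]
    exact this hb ha (le_of_not_ge hab)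
  have ha0 : 0 < ‖a‖ := ht.trans_le ha
  have hb0 : 0 < ‖b‖ := ha0.trans_le hab
  have hsplit : rieszKernel d a - rieszKernel d b
      = (‖a‖ ^ d)⁻¹ • (a - b) + ((‖a‖ ^ d)⁻¹ - (‖b‖ ^ d)⁻¹) • b := by
    simp only [rieszKernel, smul_sub, sub_smul]; abel
  have hpow : ‖b‖ ^ d - ‖a‖ ^ d ≤ ‖a - b‖ * d * ‖b‖ ^ (d - 1) := by
    have h := abs_pow_sub_pow_le ‖b‖ ‖a‖ d
    rw [abs_norm, abs_norm, max_eq_left hab] at h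
    calc ‖b‖ ^ d - ‖a‖ ^ d ≤ |‖b‖ ^ d - ‖a‖ ^ d| := le_abs_self _
      _ ≤ |‖b‖ - ‖a‖| * d * ‖b‖ ^ (d - 1) := h
      _ ≤ ‖a - b‖ * d * ‖b‖ ^ (d - 1) := by
        gcongr; rw [norm_sub_rev]; exact abs_norm_sub_norm_le b a
  have hcoef : ((‖a‖ ^ d)⁻¹ - (‖b‖ ^ d)⁻¹) * ‖b‖ ≤ d * ‖a - b‖ / ‖a‖ ^ d := by
    have hb' : ‖b‖ ^ (d - 1) * ‖b‖ = ‖b‖ ^ d := by rw [← pow_succ, Nat.sub_add_cancel hd]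
    rw [inv_sub_inv (by positivity) (by positivity), div_mul_eq_mul_div, div_le_div_iff₀
      (by positivity) (by positivity)]
    calc (‖b‖ ^ d - ‖a‖ ^ d) * ‖b‖ * ‖a‖ ^ d
        ≤ ‖a - b‖ * d * ‖b‖ ^ (d - 1) * ‖b‖ * ‖a‖ ^ d := by gcongr
      _ = d * ‖a - b‖ * (‖a‖ ^ d * ‖b‖ ^ d) := by rw [mul_assoc _ (‖b‖ ^ (d - 1)), hb']; ring
  have hanti : (‖b‖ ^ d)⁻¹ ≤ (‖a‖ ^ d)⁻¹ := by gcongr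
  calc ‖rieszKernel d a - rieszKernel d b‖
      ≤ (‖a‖ ^ d)⁻¹ * ‖a - b‖ + ((‖a‖ ^ d)⁻¹ - (‖b‖ ^ d)⁻¹) * ‖b‖ := by
        rw [hsplit]
        refine (norm_add_le _ _).trans_eq ?_
        rw [norm_smul, norm_smul, Real.norm_of_nonneg (by positivity),
          Real.norm_of_nonneg (sub_nonneg.2 hanti)]
    _ ≤ ‖a - b‖ / ‖a‖ ^ d + d * ‖a - b‖ / ‖a‖ ^ d := by rw [inv_mul_eq_div]; gcongr
    _ = (d + 1) * ‖a - b‖ / ‖a‖ ^ d := by ring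
    _ ≤ (d + 1) * ‖a - b‖ / t ^ d := by gcongr

lemma norm_rieszKernel_sub_le_of_two_mul_le (hd : 1 ≤ d) {a b : E} (hab : 2 * ‖a - b‖ ≤ ‖a‖)
    (ha : a ≠ 0) : ‖rieszKernel d a - rieszKernel d b‖ ≤ (d + 1) * 2 ^ d * ‖a - b‖ / ‖a‖ ^ d := by
  have hb : ‖a‖ / 2 ≤ ‖b‖ := by linarith [norm_sub_norm_le a b]
  refine (norm_rieszKernel_sub_le hd (by positivity) (half_le_self (norm_nonneg a)) hb).trans_eq ?_
  have : ‖a‖ ≠ 0 := norm_ne_zero_iff.2 ha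
  rw [div_pow]
  field_simp

end RieszKernel

lemma ball_sdiff_ball_subset_biUnion {α : Type*} [PseudoMetricSpace α] (c : α) (s : ℝ) (N : ℕ) :
    ball c s \ ball c (s / 2 ^ N)
      ⊆ ⋃ k ∈ Finset.range N, ball c (s / 2 ^ k) \ ball c (s / 2 ^ k / 2) := by
  induction N with
  | zero => simp
  | succ N ih =>
    rintro z ⟨hzs, hzN⟩
    by_cases hz : z ∈ ball c (s / 2 ^ N)
    · rw [pow_succ, ← div_div] at hzN
      exact mem_iUnion₂.2 ⟨N, Finset.self_mem_range_succ N, hz, hzN⟩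
    · obtain ⟨k, hk, hzk⟩ := mem_iUnion₂.1 (ih ⟨hzs, hz⟩)
      exact mem_iUnion₂.2 ⟨k, Finset.range_subset_range.2 N.le_succ hk, hzk⟩

lemma ball_sdiff_singleton_subset_iUnion {α : Type*} [MetricSpace α] (c : α) {s : ℝ} (hs : 0 < s) :
    ball c s \ {c} ⊆ ⋃ k : ℕ, ball c (s / 2 ^ k) \ ball c (s / 2 ^ k / 2) := by
  rintro z ⟨hzs, hzc⟩
  obtain ⟨N, hN⟩ := exists_pow_lt_of_lt_one (div_pos (dist_pos.2 (Ne.symm hzc)) hs) two_inv_lt_one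
  have hzN : z ∉ ball c (s / 2 ^ N) := by
    rw [mem_ball', not_lt, div_le_iff₀' (by positivity)]
    rw [lt_div_iff₀ hs, inv_pow, inv_mul_lt_iff₀ (by positivity)] at hN
    exact hN.le
  obtain ⟨k, -, hk⟩ := mem_iUnion₂.1 (ball_sdiff_ball_subset_biUnion c s N ⟨hzs, hzN⟩)
  exact mem_iUnion.2 ⟨k, hk⟩

lemma lintegral_biUnion_finset_le {α β : Type*} [MeasurableSpace α] {μ : Measure α}
    (s : Finset β) (t : β → Set α) (f : α → ℝ≥0∞) :
    ∫⁻ a in ⋃ b ∈ s, t b, f a ∂μ ≤ ∑ b ∈ s, ∫⁻ a in t b, f a ∂μ := by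
  classical
  induction s using Finset.induction_on with
  | empty => simp
  | insert b s hb ih =>
    rw [Finset.set_biUnion_insert, Finset.sum_insert hb]
    exact (lintegral_union_le _ _ _).trans (add_le_add le_rfl ih)

-- The ratio of the geometric series over dyadic shells: `1 / (d + 1)` is the least value of
-- the exponent `1 - d / p` for `p ≥ d + 1`.
noncomputable def dyadicRatio (d : ℕ) : ℝ := (2 ^ ((d : ℝ) + 1)⁻¹)⁻¹

lemma dyadicRatio_nonneg (d : ℕ) : 0 ≤ dyadicRatio d := by unfold dyadicRatio; positivity

lemma dyadicRatio_lt_one (d : ℕ) : dyadicRatio d < 1 :=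
  inv_lt_one_of_one_lt₀ (Real.one_lt_rpow one_lt_two (by positivity))

lemma div_two_pow_rpow_le {d : ℕ} {s α : ℝ} (hs : 0 ≤ s) (hα : ((d : ℝ) + 1)⁻¹ ≤ α) (k : ℕ) :
    (s / 2 ^ k) ^ α ≤ s ^ α * dyadicRatio d ^ k := by
  rw [Real.div_rpow hs (by positivity), ← Real.rpow_pow_comm zero_le_two, div_eq_mul_inv, ← inv_pow,
    dyadicRatio]
  gcongr
  exact one_le_two

lemma Real.rpow_div_log {x : ℝ} (hx0 : 0 < x) (hx1 : x ≠ 1) (a : ℝ) : x ^ (a / log x) = exp a := by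
  rw [Real.rpow_def_of_pos hx0, mul_div_cancel₀ _ (Real.log_ne_zero_of_pos_of_ne_one hx0 hx1)]

lemma exists_two_pow_near_inv {r : ℝ} (hr0 : 0 < r) (hr1 : r ≤ 1) :
    ∃ N : ℕ, (2 : ℝ) ^ N ≤ r⁻¹ ∧ 1 / 2 ^ N ≤ 2 * r ∧ (N : ℝ) ≤ 2 * -log r := by
  obtain ⟨N, hN1, hN2⟩ := exists_nat_pow_near (one_le_inv₀ hr0 |>.2 hr1) one_lt_two
  refine ⟨N, hN1, ?_, ?_⟩
  · rw [pow_succ, inv_lt_iff_one_lt_mul₀ hr0] at hN2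
    rw [div_le_iff₀ (by positivity)]
    linarith
  · have h := Real.log_le_log (by positivity) hN1
    rw [Real.log_pow, Real.log_inv] at h
    nlinarith [Real.log_two_gt_d9]

lemma mul_rpow_one_sub_div_neg_log_le {d : ℕ} {r t : ℝ} (hr0 : 0 < r) (hr1 : r < 1)
    (ht : 1 ≤ t) : (t * r) ^ (1 - d / -log r) ≤ t * (r * exp d) := by
  have hdp : 0 ≤ (d : ℝ) / -log r :=
    div_nonneg (Nat.cast_nonneg d) (neg_nonneg.2 (Real.log_nonpos hr0.le hr1.le))
  rw [Real.mul_rpow (by linarith) hr0.le, sub_eq_add_neg, Real.rpow_add hr0, Real.rpow_one,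
    ← neg_div, neg_div_neg_eq, Real.rpow_div_log hr0 hr1.ne]
  gcongr
  exact (Real.rpow_le_rpow_of_exponent_le ht (by linarith)).trans_eq (Real.rpow_one t)

lemma two_pow_rpow_div_neg_log_le {d N : ℕ} {r : ℝ} (hr0 : 0 < r) (hr1 : r < 1)
    (hN : (2 : ℝ) ^ N ≤ r⁻¹) : ((2 : ℝ) ^ N) ^ (d / -log r) ≤ exp d :=
  calc ((2 : ℝ) ^ N) ^ (d / -log r) ≤ r⁻¹ ^ (d / -log r) := by
        gcongr; exact div_nonneg (Nat.cast_nonneg d) (neg_nonneg.2 (Real.log_nonpos hr0.le hr1.le))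
    _ = exp d := by
        rw [Real.inv_rpow hr0.le, ← Real.rpow_neg hr0.le, ← neg_div, neg_div_neg_eq,
          Real.rpow_div_log hr0 hr1.ne]

section Yudovich

variable {d : ℕ} {Θ : ℝ → ℝ} {ρ : EuclideanSpace ℝ (Fin d) → ℝ} {c : EuclideanSpace ℝ (Fin d)}
  {p s : ℝ}

lemma ulNorm_le_mul_yudNorm (hΘ : 0 < Θ p) (hp : 1 ≤ p) :
    ulNorm (ENNReal.ofReal p) ρ ≤ ENNReal.ofReal (Θ p) * yudNorm Θ ρ := by
  have h : ulNorm (ENNReal.ofReal p) ρ / ENNReal.ofReal (Θ p) ≤ yudNorm Θ ρ :=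
    le_iSup (fun q : Ici (1 : ℝ) => ulNorm (ENNReal.ofReal q) ρ / ENNReal.ofReal (Θ q)) ⟨p, hp⟩
  rwa [ENNReal.div_le_iff_le_mul (.inl (by simpa using hΘ)) (.inl ENNReal.ofReal_ne_top),
    mul_comm] at h

-- Taking `max _ 1` makes it dominate `vol(B₁)^θ` for every `θ ∈ [0, 1]`.
noncomputable def unitBallVolumeBound (d : ℕ) : ℝ :=
  max (volume (ball (0 : EuclideanSpace ℝ (Fin d)) 1)).toReal 1

lemma one_le_unitBallVolumeBound (d : ℕ) : 1 ≤ unitBallVolumeBound d := le_max_right _ _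

lemma volume_ball_rpow_le {θ : ℝ} (hs : 0 < s) (hθ0 : 0 ≤ θ) (hθ1 : θ ≤ 1) :
    volume (ball c s) ^ θ ≤ ENNReal.ofReal (unitBallVolumeBound d * s ^ (d * θ)) := by
  set ω := (volume (ball (0 : EuclideanSpace ℝ (Fin d)) 1)).toReal
  have hω : ω ^ θ ≤ unitBallVolumeBound d := by
    rcases le_total ω 1 with h | h
    · exact (Real.rpow_le_one ENNReal.toReal_nonneg h hθ0).trans (le_max_right _ _)
    · exact (Real.rpow_le_rpow_of_exponent_le h hθ1).trans_eq (Real.rpow_one ω) |>.trans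
        (le_max_left _ _)
  rw [Measure.addHaar_ball_of_pos _ _ hs, finrank_euclideanSpace_fin,
    ← ENNReal.ofReal_toReal measure_ball_lt_top.ne, ← ENNReal.ofReal_mul (by positivity),
    ENNReal.ofReal_rpow_of_nonneg (by positivity) hθ0]
  refine ENNReal.ofReal_le_ofReal ?_
  rw [Real.mul_rpow (by positivity) ENNReal.toReal_nonneg, ← Real.rpow_natCast,
    ← Real.rpow_mul hs.le, mul_comm]
  gcongr

lemma lintegral_ball_le_mul_yudNorm (hρ : AEStronglyMeasurable ρ) (hΘ : 0 < Θ p) (hs0 : 0 < s)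
    (hs1 : s ≤ 1) (hp : 1 ≤ p) :
    ∫⁻ z in ball c s, ENNReal.ofReal (ρ z)
      ≤ ENNReal.ofReal (Θ p * unitBallVolumeBound d * s ^ (d - d / p)) * yudNorm Θ ρ := by
  have hp0 : 0 < p := one_pos.trans_le hp
  set μ := volume.restrict (ball c s)
  have holder :
      eLpNorm ρ 1 μ ≤ eLpNorm ρ (ENNReal.ofReal p) μ * volume (ball c s) ^ (1 - 1 / p) := by
    have h := eLpNorm_le_eLpNorm_mul_rpow_measure_univ (μ := μ) (ENNReal.one_le_ofReal.2 hp)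
      hρ.restrict
    rwa [Measure.restrict_apply_univ, ENNReal.toReal_one, ENNReal.toReal_ofReal hp0.le,
      one_div_one] at h
  have hloc : eLpNorm ρ (ENNReal.ofReal p) μ ≤ ulNorm (ENNReal.ofReal p) ρ :=
    (eLpNorm_mono_measure ρ (Measure.restrict_mono (ball_subset_ball hs1) le_rfl)).trans
      (le_iSup (fun x => eLpNorm ρ _ (volume.restrict (ball x 1))) c)
  have hvol : volume (ball c s) ^ (1 - 1 / p)
      ≤ ENNReal.ofReal (unitBallVolumeBound d * s ^ (d - d / p)) := by
    have hp' : 1 / p ≤ 1 := (div_le_one hp0).2 hp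
    rw [show (d : ℝ) - d / p = d * (1 - 1 / p) by ring]
    exact volume_ball_rpow_le hs0 (by linarith) (by linarith [one_div_pos.2 hp0])
  calc ∫⁻ z in ball c s, ENNReal.ofReal (ρ z) ≤ eLpNorm ρ 1 μ := by
        rw [eLpNorm_one_eq_lintegral_enorm]; exact lintegral_mono fun z => ofReal_le_enorm _
    _ ≤ ENNReal.ofReal (Θ p) * yudNorm Θ ρ
          * ENNReal.ofReal (unitBallVolumeBound d * s ^ (d - d / p)) :=
        holder.trans (mul_le_mul' (hloc.trans (ulNorm_le_mul_yudNorm hΘ hp)) hvol)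
    _ = _ := by
        rw [mul_right_comm, ← ENNReal.ofReal_mul hΘ.le, mul_assoc]

lemma lintegral_shell_le_mul_yudNorm (m : ℕ) (hρ : AEStronglyMeasurable ρ) (hΘ : 0 < Θ p)
    (hs0 : 0 < s) (hs1 : s ≤ 1) (hp : 1 ≤ p) :
    ∫⁻ z in ball c s \ ball c (s / 2), ENNReal.ofReal ((‖c - z‖ ^ m)⁻¹ * ρ z)
      ≤ ENNReal.ofReal (2 ^ m * Θ p * unitBallVolumeBound d * s ^ (d - d / p - m))
        * yudNorm Θ ρ := by
  have hw : ∀ z ∈ ball c s \ ball c (s / 2), ENNReal.ofReal ((‖c - z‖ ^ m)⁻¹ * ρ z)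
      ≤ ENNReal.ofReal (((s / 2) ^ m)⁻¹) * ENNReal.ofReal (ρ z) := by
    rintro z ⟨-, hz⟩
    rw [mem_ball', not_lt, dist_eq_norm] at hz
    rw [ENNReal.ofReal_mul (by positivity)]
    gcongr
  calc ∫⁻ z in ball c s \ ball c (s / 2), ENNReal.ofReal ((‖c - z‖ ^ m)⁻¹ * ρ z)
      ≤ ∫⁻ z in ball c s \ ball c (s / 2),
          ENNReal.ofReal (((s / 2) ^ m)⁻¹) * ENNReal.ofReal (ρ z) :=
        setLIntegral_mono' (measurableSet_ball.diff measurableSet_ball) hw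
    _ ≤ ENNReal.ofReal (((s / 2) ^ m)⁻¹) * ∫⁻ z in ball c s, ENNReal.ofReal (ρ z) := by
        rw [lintegral_const_mul' _ _ ENNReal.ofReal_ne_top]
        gcongr
        exact sdiff_subset
    _ ≤ ENNReal.ofReal (((s / 2) ^ m)⁻¹)
          * (ENNReal.ofReal (Θ p * unitBallVolumeBound d * s ^ (d - d / p)) * yudNorm Θ ρ) := by
        gcongr; exact lintegral_ball_le_mul_yudNorm hρ hΘ hs0 hs1 hp
    _ = _ := by
        rw [← mul_assoc, ← ENNReal.ofReal_mul (by positivity), Real.rpow_sub hs0 _ m,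
          Real.rpow_natCast, div_pow]
        congr 2
        field_simp

lemma lintegral_ball_inv_pow_le_mul_yudNorm (hd : 1 ≤ d) (hρ : AEStronglyMeasurable ρ)
    (hΘ : 0 < Θ p) (hs0 : 0 < s) (hs1 : s ≤ 1) (hp : d + 1 ≤ p) :
    ∫⁻ z in ball c s, ENNReal.ofReal ((‖c - z‖ ^ (d - 1))⁻¹ * ρ z)
      ≤ ENNReal.ofReal (2 ^ (d - 1) * Θ p * unitBallVolumeBound d * s ^ (1 - d / p)
          / (1 - dyadicRatio d)) * yudNorm Θ ρ := by
  have : Nonempty (Fin d) := ⟨⟨0, hd⟩⟩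
  have hp0 : 0 < p := by linarith
  have hα : ((d : ℝ) + 1)⁻¹ ≤ 1 - d / p := by
    have h1 : (d : ℝ) / p ≤ d / (d + 1) := by gcongr
    have h2 : (d : ℝ) / (d + 1) = 1 - ((d : ℝ) + 1)⁻¹ := by field_simp; ring
    linarith
  have hV := one_le_unitBallVolumeBound d
  set q := dyadicRatio d
  set C := 2 ^ (d - 1) * Θ p * unitBallVolumeBound d * s ^ (1 - d / p)
  have hterm : ∀ k : ℕ, ∫⁻ z in ball c (s / 2 ^ k) \ ball c (s / 2 ^ k / 2),
      ENNReal.ofReal ((‖c - z‖ ^ (d - 1))⁻¹ * ρ z)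
        ≤ ENNReal.ofReal C * yudNorm Θ ρ * ENNReal.ofReal q ^ k := by
    intro k
    have hσ1 : s / 2 ^ k ≤ 1 := (div_le_self hs0.le (one_le_pow₀ one_le_two)).trans hs1
    have hexp : (d : ℝ) - d / p - ((d - 1 : ℕ) : ℝ) = 1 - d / p := by
      rw [Nat.cast_sub hd, Nat.cast_one]; ring
    have hσ : (s / 2 ^ k) ^ (1 - d / p) ≤ s ^ (1 - d / p) * q ^ k :=
      div_two_pow_rpow_le hs0.le hα k
    calc _ ≤ _ := lintegral_shell_le_mul_yudNorm (d - 1) hρ hΘ (by positivity) hσ1 (by linarith)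
      _ ≤ ENNReal.ofReal (C * q ^ k) * yudNorm Θ ρ := by
        rw [hexp]
        gcongr ENNReal.ofReal ?_ * _
        calc _ = 2 ^ (d - 1) * Θ p * unitBallVolumeBound d * (s / 2 ^ k) ^ (1 - d / p) := by ring
          _ ≤ 2 ^ (d - 1) * Θ p * unitBallVolumeBound d * (s ^ (1 - d / p) * q ^ k) := by gcongr
          _ = C * q ^ k := by ring
      _ = _ := by
        rw [ENNReal.ofReal_mul (by positivity), ENNReal.ofReal_pow (dyadicRatio_nonneg d)]
        ring
  calc ∫⁻ z in ball c s, ENNReal.ofReal ((‖c - z‖ ^ (d - 1))⁻¹ * ρ z)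
      = ∫⁻ z in ball c s \ {c}, ENNReal.ofReal ((‖c - z‖ ^ (d - 1))⁻¹ * ρ z) :=
        setLIntegral_congr (sdiff_null_ae_eq_self (measure_singleton c)).symm
    _ ≤ ∑' k : ℕ, ∫⁻ z in ball c (s / 2 ^ k) \ ball c (s / 2 ^ k / 2),
          ENNReal.ofReal ((‖c - z‖ ^ (d - 1))⁻¹ * ρ z) :=
        (lintegral_mono_set (ball_sdiff_singleton_subset_iUnion c hs0)).trans
          (lintegral_iUnion_le _ _)
    _ ≤ ∑' k : ℕ, ENNReal.ofReal C * yudNorm Θ ρ * ENNReal.ofReal q ^ k :=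
        ENNReal.tsum_le_tsum hterm
    _ = ENNReal.ofReal (C / (1 - q)) * yudNorm Θ ρ := by
        have hq := dyadicRatio_lt_one d
        rw [ENNReal.tsum_mul_left, ENNReal.tsum_geometric, ← ENNReal.ofReal_one,
          ← ENNReal.ofReal_sub _ (dyadicRatio_nonneg d), ← ENNReal.ofReal_inv_of_pos (by linarith),
          mul_right_comm, ← ENNReal.ofReal_mul (by positivity), div_eq_mul_inv]

lemma setLIntegral_compl_ball_one_le (m : ℕ) :
    ∫⁻ z in (ball c 1)ᶜ, ENNReal.ofReal ((‖c - z‖ ^ m)⁻¹ * ρ z) ≤ ∫⁻ z, ENNReal.ofReal (ρ z) := by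
  refine (setLIntegral_mono' measurableSet_ball.compl fun z hz => ?_).trans
    (setLIntegral_le_lintegral _ _)
  rw [mem_compl_iff, mem_ball', not_lt, dist_eq_norm] at hz
  rw [ENNReal.ofReal_mul (by positivity)]
  exact mul_le_of_le_one_left' (ENNReal.ofReal_le_one.2 (inv_le_one_of_one_le₀ (one_le_pow₀ hz)))

lemma setLIntegral_compl_ball_inv_pow_le (hρ : AEStronglyMeasurable ρ) (hΘ : 0 < Θ p)
    (hp : 1 ≤ p) {N : ℕ} (hN : 1 / 2 ^ N ≤ s) :
    ∫⁻ z in (ball c s)ᶜ, ENNReal.ofReal ((‖c - z‖ ^ d)⁻¹ * ρ z)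
      ≤ ENNReal.ofReal (N * (2 ^ d * Θ p * unitBallVolumeBound d * (2 ^ N) ^ (d / p)))
          * yudNorm Θ ρ + ∫⁻ z, ENNReal.ofReal (ρ z) := by
  set f := fun z => ENNReal.ofReal ((‖c - z‖ ^ d)⁻¹ * ρ z)
  have hV := one_le_unitBallVolumeBound d
  have hcover : (ball c s)ᶜ ⊆ (ball c 1 \ ball c (1 / 2 ^ N)) ∪ (ball c 1)ᶜ := by
    intro z hz
    by_cases h1 : z ∈ ball c 1
    · exact .inl ⟨h1, fun h => hz (ball_subset_ball hN h)⟩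
    · exact .inr h1
  have hshell : ∀ k ∈ Finset.range N, ∫⁻ z in ball c (1 / 2 ^ k) \ ball c (1 / 2 ^ k / 2), f z
      ≤ ENNReal.ofReal (2 ^ d * Θ p * unitBallVolumeBound d * (2 ^ N) ^ (d / p)) * yudNorm Θ ρ := by
    intro k hk
    have hσ1 : 1 / 2 ^ k ≤ (1 : ℝ) := div_le_self zero_le_one (one_le_pow₀ one_le_two)
    refine (lintegral_shell_le_mul_yudNorm d hρ hΘ (by positivity) hσ1 hp).trans ?_
    rw [show (d : ℝ) - d / p - d = -(d / p) by ring, Real.rpow_neg (by positivity), one_div,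
      Real.inv_rpow (by positivity), inv_inv]
    gcongr
    · exact one_le_two
    · exact (Finset.mem_range.1 hk).le
  calc ∫⁻ z in (ball c s)ᶜ, f z
      ≤ (∫⁻ z in ball c 1 \ ball c (1 / 2 ^ N), f z) + ∫⁻ z in (ball c 1)ᶜ, f z :=
        (lintegral_mono_set hcover).trans (lintegral_union_le _ _ _)
    _ ≤ (∑ k ∈ Finset.range N, ∫⁻ z in ball c (1 / 2 ^ k) \ ball c (1 / 2 ^ k / 2), f z)
          + ∫⁻ z, ENNReal.ofReal (ρ z) := by
        refine add_le_add ?_ (setLIntegral_compl_ball_one_le d)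
        exact (lintegral_mono_set (ball_sdiff_ball_subset_biUnion c 1 N)).trans
          (lintegral_biUnion_finset_le _ _ _)
    _ ≤ _ := by
        gcongr
        refine (Finset.sum_le_sum hshell).trans_eq ?_
        rw [Finset.sum_const, Finset.card_range, nsmul_eq_mul,
          ENNReal.ofReal_mul (Nat.cast_nonneg N), ENNReal.ofReal_natCast]
        ring

end Yudovich

section RieszIntegrals

variable {d : ℕ} {Θ : ℝ → ℝ} {ρ : EuclideanSpace ℝ (Fin d) → ℝ} {p : ℝ}
  {x y : EuclideanSpace ℝ (Fin d)}

@[fun_prop]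
lemma measurable_rieszKernel : Measurable (rieszKernel d : EuclideanSpace ℝ (Fin d) → _) :=
  ((measurable_norm.pow_const d).inv).smul measurable_id

lemma lintegral_norm_rieszKernel_sub_le_add {μ : Measure (EuclideanSpace ℝ (Fin d))}
    (hρ : Measurable ρ) (x y : EuclideanSpace ℝ (Fin d)) :
    ∫⁻ z, ENNReal.ofReal (‖rieszKernel d (x - z) - rieszKernel d (y - z)‖ * ρ z) ∂μ
      ≤ ∫⁻ z, ENNReal.ofReal (‖rieszKernel d (x - z)‖ * ρ z) ∂μ
        + ∫⁻ z, ENNReal.ofReal (‖rieszKernel d (y - z)‖ * ρ z) ∂μ := by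
  rw [← lintegral_add_left (by fun_prop)]
  refine lintegral_mono fun z => ?_
  simp only [ENNReal.ofReal_mul (norm_nonneg _), ← add_mul]
  gcongr
  exact (ENNReal.ofReal_le_ofReal (norm_sub_le _ _)).trans ENNReal.ofReal_add_le

lemma lintegral_norm_rieszKernel_le (hd : 2 ≤ d) (hρ : AEStronglyMeasurable ρ)
    (hΘ : 0 < Θ (d + 1)) (c : EuclideanSpace ℝ (Fin d)) :
    ∫⁻ z, ENNReal.ofReal (‖rieszKernel d (c - z)‖ * ρ z)
      ≤ ENNReal.ofReal (2 ^ (d - 1) * Θ (d + 1) * unitBallVolumeBound d / (1 - dyadicRatio d))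
          * yudNorm Θ ρ + ∫⁻ z, ENNReal.ofReal (ρ z) := by
  simp_rw [norm_rieszKernel hd]
  rw [← lintegral_add_compl _ (measurableSet_ball (x := c) (ε := 1))]
  refine add_le_add ?_ (setLIntegral_compl_ball_one_le _)
  simpa using lintegral_ball_inv_pow_le_mul_yudNorm (by omega) hρ hΘ one_pos le_rfl le_rfl

lemma setLIntegral_ball_norm_rieszKernel_sub_le (hd : 2 ≤ d) (hρ : Measurable ρ) (hΘ : 0 < Θ p)
    (hp : d + 1 ≤ p) (hr0 : 0 < ‖x - y‖) (hr1 : 3 * ‖x - y‖ ≤ 1) :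
    ∫⁻ z in ball x (2 * ‖x - y‖),
        ENNReal.ofReal (‖rieszKernel d (x - z) - rieszKernel d (y - z)‖ * ρ z)
      ≤ ENNReal.ofReal (2 ^ d * Θ p * unitBallVolumeBound d * (3 * ‖x - y‖) ^ (1 - d / p)
          / (1 - dyadicRatio d)) * yudNorm Θ ρ := by
  set r := ‖x - y‖
  have hx : ball x (2 * r) ⊆ ball x (3 * r) := ball_subset_ball (by linarith)
  have hy : ball x (2 * r) ⊆ ball y (3 * r) :=
    ball_subset_ball' (le_of_eq (by rw [dist_eq_norm]; ring))
  have hV := one_le_unitBallVolumeBound d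
  have hq := dyadicRatio_lt_one d
  have hnear (c : EuclideanSpace ℝ (Fin d)) := lintegral_ball_inv_pow_le_mul_yudNorm (c := c)
    (by omega) hρ.aestronglyMeasurable hΘ (by positivity) hr1 hp
  refine (lintegral_norm_rieszKernel_sub_le_add hρ x y).trans ?_
  simp_rw [norm_rieszKernel hd]
  refine (add_le_add ((lintegral_mono_set hx).trans (hnear x))
    ((lintegral_mono_set hy).trans (hnear y))).trans_eq ?_
  rw [← add_mul, ← ENNReal.ofReal_add (by positivity) (by positivity)]
  congr 2
  rw [show (2 : ℝ) ^ d = 2 * 2 ^ (d - 1) by rw [← pow_succ', Nat.sub_add_cancel (by omega)]]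
  ring

lemma setLIntegral_compl_ball_norm_rieszKernel_sub_le (hd : 1 ≤ d) (hr0 : 0 < ‖x - y‖) :
    ∫⁻ z in (ball x (2 * ‖x - y‖))ᶜ,
        ENNReal.ofReal (‖rieszKernel d (x - z) - rieszKernel d (y - z)‖ * ρ z)
      ≤ ENNReal.ofReal ((d + 1) * 2 ^ d * ‖x - y‖)
        * ∫⁻ z in (ball x (2 * ‖x - y‖))ᶜ, ENNReal.ofReal ((‖x - z‖ ^ d)⁻¹ * ρ z) := by
  rw [← lintegral_const_mul' _ _ ENNReal.ofReal_ne_top]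
  refine setLIntegral_mono' measurableSet_ball.compl fun z hz => ?_
  rw [mem_compl_iff, mem_ball', not_lt, dist_eq_norm] at hz
  have hxz : x - z ≠ 0 := norm_ne_zero_iff.1 (by linarith)
  have hK := norm_rieszKernel_sub_le_of_two_mul_le (b := y - z) hd
    (by rwa [sub_sub_sub_cancel_right]) hxz
  rw [sub_sub_sub_cancel_right] at hK
  rw [ENNReal.ofReal_mul (norm_nonneg (rieszKernel d (x - z) - rieszKernel d (y - z))),
    ENNReal.ofReal_mul (by positivity : (0 : ℝ) ≤ (‖x - z‖ ^ d)⁻¹), ← mul_assoc,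
    ← ENNReal.ofReal_mul (by positivity : (0 : ℝ) ≤ (d + 1) * 2 ^ d * ‖x - y‖)]
  gcongr
  rwa [← div_eq_mul_inv]

lemma lintegral_norm_rieszKernel_sub_le_of_two_pow_le (hd : 2 ≤ d) (hρ : Measurable ρ)
    (hΘ : 0 < Θ p) (hp : d + 1 ≤ p) (hr0 : 0 < ‖x - y‖) (hr1 : 3 * ‖x - y‖ ≤ 1) {N : ℕ}
    (hN : 1 / 2 ^ N ≤ 2 * ‖x - y‖) :
    ∫⁻ z, ENNReal.ofReal (‖rieszKernel d (x - z) - rieszKernel d (y - z)‖ * ρ z)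
      ≤ ENNReal.ofReal (2 ^ d * Θ p * unitBallVolumeBound d * (3 * ‖x - y‖) ^ (1 - d / p)
            / (1 - dyadicRatio d)) * yudNorm Θ ρ
        + ENNReal.ofReal ((d + 1) * 2 ^ d * ‖x - y‖)
          * (ENNReal.ofReal (N * (2 ^ d * Θ p * unitBallVolumeBound d * (2 ^ N) ^ (d / p)))
              * yudNorm Θ ρ + ∫⁻ z, ENNReal.ofReal (ρ z)) := by
  rw [← lintegral_add_compl _ (measurableSet_ball (x := x) (ε := 2 * ‖x - y‖))]
  refine add_le_add (setLIntegral_ball_norm_rieszKernel_sub_le hd hρ hΘ hp hr0 hr1)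
    ((setLIntegral_compl_ball_norm_rieszKernel_sub_le (by omega) hr0).trans ?_)
  gcongr
  exact setLIntegral_compl_ball_inv_pow_le hρ.aestronglyMeasurable hΘ (by linarith) hN

lemma lintegral_norm_rieszKernel_sub_le_of_lt_exp (hd : 2 ≤ d) (hρ : Measurable ρ)
    (hΘ : 0 < Θ (-log ‖x - y‖)) (hr0 : 0 < ‖x - y‖) (hr : ‖x - y‖ < exp (-((d : ℝ) + 1))) :
    ∫⁻ z, ENNReal.ofReal (‖rieszKernel d (x - z) - rieszKernel d (y - z)‖ * ρ z)
      ≤ ENNReal.ofReal ((3 * 2 ^ d * unitBallVolumeBound d * exp d / (1 - dyadicRatio d)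
            + 2 * (d + 1) * 4 ^ d * unitBallVolumeBound d * exp d)
          * (‖x - y‖ * -log ‖x - y‖ * Θ (-log ‖x - y‖))) * yudNorm Θ ρ
        + ENNReal.ofReal ((d + 1) * 2 ^ d * ‖x - y‖) * ∫⁻ z, ENNReal.ofReal (ρ z) := by
  set r := ‖x - y‖
  set p := -log r
  set V := unitBallVolumeBound d
  have hV : 1 ≤ V := one_le_unitBallVolumeBound d
  have hq : 0 < 1 - dyadicRatio d := sub_pos.2 (dyadicRatio_lt_one d)
  have hlog : log r < -((d : ℝ) + 1) := (Real.log_lt_iff_lt_exp hr0).2 hr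
  have hp : d + 1 ≤ p := by linarith
  have hp1 : 1 ≤ p := by linarith [(Nat.cast_nonneg d : (0 : ℝ) ≤ d)]
  have hr1 : r < 1 := by linarith [Real.exp_lt_one_iff.2 (by linarith : -((d : ℝ) + 1) < 0)]
  have hr3 : 3 * r ≤ 1 := by
    have hd2 : (2 : ℝ) ≤ d := by exact_mod_cast hd
    have h : 3 ≤ p := by linarith
    have h3 : 3 * exp (-3) ≤ 1 := by
      rw [Real.exp_neg, ← div_eq_mul_inv, div_le_one (exp_pos 3)]
      linarith [Real.add_one_le_exp (3 : ℝ)]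
    have hr' : r ≤ exp (-3) := by
      rw [← Real.exp_log hr0]; exact exp_le_exp.2 (by linarith)
    linarith
  obtain ⟨N, hN, hNs, hNp⟩ := exists_two_pow_near_inv hr0 hr1.le
  refine (lintegral_norm_rieszKernel_sub_le_of_two_pow_le hd hρ hΘ hp hr0 hr3 hNs).trans ?_
  have h₁ : 2 ^ d * Θ p * V * (3 * r) ^ (1 - d / p) / (1 - dyadicRatio d)
      ≤ 3 * 2 ^ d * V * exp d / (1 - dyadicRatio d) * (r * p * Θ p) :=
    calc _ ≤ 2 ^ d * Θ p * V * (3 * (r * exp d)) / (1 - dyadicRatio d) := by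
          gcongr; exact mul_rpow_one_sub_div_neg_log_le hr0 hr1 (by norm_num)
      _ = 3 * 2 ^ d * V * exp d / (1 - dyadicRatio d) * (r * Θ p) := by ring
      _ ≤ 3 * 2 ^ d * V * exp d / (1 - dyadicRatio d) * (p * (r * Θ p)) := by
          gcongr _ * ?_; exact le_mul_of_one_le_left (by positivity) hp1
      _ = _ := by ring
  have h₂ : (d + 1) * 2 ^ d * r * (N * (2 ^ d * Θ p * V * (2 ^ N) ^ (d / p)))
      ≤ 2 * (d + 1) * 4 ^ d * V * exp d * (r * p * Θ p) :=
    calc _ ≤ (d + 1) * 2 ^ d * r * (2 * p * (2 ^ d * Θ p * V * exp d)) := by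
          gcongr; exact two_pow_rpow_div_neg_log_le hr0 hr1 hN
      _ = _ := by rw [show (4 : ℝ) ^ d = 2 ^ d * 2 ^ d by rw [← mul_pow]; norm_num]; ring
  rw [mul_add, ← mul_assoc, ← ENNReal.ofReal_mul (by positivity), ← add_assoc, ← add_mul,
    ← ENNReal.ofReal_add (by positivity) (by positivity), add_mul]
  gcongr
  linarith

theorem exists_lintegral_rieszKernel_sub_le_of_lt_exp (hd : 2 ≤ d) (hΘmono : Monotone Θ)
    (hΘpos : ∀ p, 0 < Θ p) :
    ∃ C : ℝ, 0 < C ∧ ∀ ρ : EuclideanSpace ℝ (Fin d) → ℝ, Measurable ρ →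
      ∀ x y, 0 < ‖x - y‖ → ‖x - y‖ < exp (-((d : ℝ) + 1)) →
        ∫⁻ z, ENNReal.ofReal (‖rieszKernel d (x - z) - rieszKernel d (y - z)‖ * ρ z)
          ≤ ENNReal.ofReal (C * phiTheta d Θ ‖x - y‖)
            * (yudNorm Θ ρ + ∫⁻ z, ENNReal.ofReal (ρ z)) := by
  set A := 3 * 2 ^ d * unitBallVolumeBound d * exp d / (1 - dyadicRatio d)
    + 2 * (d + 1) * 4 ^ d * unitBallVolumeBound d * exp d with hA_def
  set B := (d + 1) * 2 ^ d / Θ (d + 1)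
  have hA : 0 < A := by
    have := one_le_unitBallVolumeBound d
    have := sub_pos.2 (dyadicRatio_lt_one d)
    positivity
  have hB : 0 < B := by have := hΘpos (d + 1); positivity
  refine ⟨A + B, by positivity, fun ρ hρ x y hr0 hr => ?_⟩
  set r := ‖x - y‖
  have hlog : log r < -((d : ℝ) + 1) := (Real.log_lt_iff_lt_exp hr0).2 hr
  have hΘr : Θ (d + 1) ≤ Θ (-log r) := hΘmono (by linarith)
  have hφ : phiTheta d Θ r = r * -log r * Θ (-log r) := by
    rw [phiTheta, if_neg hr0.ne', if_pos hr, abs_of_neg (by linarith)]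
  have hp1 : 1 ≤ -log r := by linarith [(Nat.cast_nonneg d : (0 : ℝ) ≤ d)]
  have hu : 0 ≤ r * -log r * Θ (-log r) :=
    mul_nonneg (mul_nonneg hr0.le (by linarith)) (hΘpos _).le
  have hb : (d + 1) * 2 ^ d * r ≤ B * (r * -log r * Θ (-log r)) :=
    calc (d + 1) * 2 ^ d * r = B * (r * Θ (d + 1)) := by
          have := hΘpos (d + 1); simp only [B]; field_simp
      _ ≤ B * (r * Θ (-log r)) := by gcongr
      _ ≤ B * (-log r * (r * Θ (-log r))) := by
          gcongr _ * ?_; exact le_mul_of_one_le_left (mul_nonneg hr0.le (hΘpos _).le) hp1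
      _ = B * (r * -log r * Θ (-log r)) := by ring
  refine (lintegral_norm_rieszKernel_sub_le_of_lt_exp hd hρ (hΘpos _) hr0 hr).trans ?_
  rw [hφ, ← hA_def, mul_add (ENNReal.ofReal _)]
  gcongr ENNReal.ofReal ?_ * _ + ENNReal.ofReal ?_ * _ <;>
    nlinarith [mul_nonneg hA.le hu, mul_nonneg hB.le hu]

lemma phiTheta_nonneg (hΘ : ∀ p, 0 ≤ Θ p) {r : ℝ} (hr : 0 ≤ r) : 0 ≤ phiTheta d Θ r := by
  unfold phiTheta
  split_ifs
  · exact le_rfl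
  · exact mul_nonneg (mul_nonneg hr (abs_nonneg _)) (hΘ _)
  · exact mul_nonneg (by positivity) (hΘ _)

theorem exists_lintegral_rieszKernel_sub_le_of_exp_le (hd : 2 ≤ d) (hΘpos : ∀ p, 0 < Θ p) :
    ∃ C : ℝ, 0 < C ∧ ∀ ρ : EuclideanSpace ℝ (Fin d) → ℝ, Measurable ρ →
      ∀ x y, exp (-((d : ℝ) + 1)) ≤ ‖x - y‖ →
        ∫⁻ z, ENNReal.ofReal (‖rieszKernel d (x - z) - rieszKernel d (y - z)‖ * ρ z)
          ≤ ENNReal.ofReal (C * phiTheta d Θ ‖x - y‖)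
            * (yudNorm Θ ρ + ∫⁻ z, ENNReal.ofReal (ρ z)) := by
  set A := 2 ^ (d - 1) * Θ (d + 1) * unitBallVolumeBound d / (1 - dyadicRatio d)
  set φ := exp (-((d : ℝ) + 1)) * (d + 1) * Θ (d + 1)
  have hA : 0 ≤ A := by
    have := one_le_unitBallVolumeBound d
    have := sub_pos.2 (dyadicRatio_lt_one d)
    have := hΘpos (d + 1)
    positivity
  have hφ : 0 < φ := by have := hΘpos (d + 1); positivity
  refine ⟨2 * (A + 1) / φ, by positivity, fun ρ hρ x y hr => ?_⟩
  have hφr : phiTheta d Θ ‖x - y‖ = φ := by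
    rw [phiTheta, if_neg ((exp_pos _).trans_le hr).ne', if_neg (not_lt.2 hr)]
  have hK := lintegral_norm_rieszKernel_le hd hρ.aestronglyMeasurable (hΘpos (d + 1))
  set Y := yudNorm Θ ρ
  set L := ∫⁻ z, ENNReal.ofReal (ρ z)
  have hsingle : ENNReal.ofReal A * Y + L ≤ (ENNReal.ofReal A + 1) * (Y + L) :=
    calc ENNReal.ofReal A * Y + L ≤ ENNReal.ofReal A * Y + L + (ENNReal.ofReal A * L + Y) :=
          le_self_add
      _ = (ENNReal.ofReal A + 1) * (Y + L) := by ring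
  calc ∫⁻ z, ENNReal.ofReal (‖rieszKernel d (x - z) - rieszKernel d (y - z)‖ * ρ z)
      ≤ (ENNReal.ofReal A * Y + L) + (ENNReal.ofReal A * Y + L) :=
        (lintegral_norm_rieszKernel_sub_le_add hρ x y).trans (add_le_add (hK x) (hK y))
    _ ≤ 2 * ((ENNReal.ofReal A + 1) * (Y + L)) := by rw [two_mul]; gcongr
    _ = _ := by
        rw [hφr, div_mul_cancel₀ _ hφ.ne', ENNReal.ofReal_mul zero_le_two, ENNReal.ofReal_add hA
          zero_le_one, ENNReal.ofReal_one, ENNReal.ofReal_ofNat, mul_assoc]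

theorem exists_lintegral_rieszKernel_sub_le (hd : 2 ≤ d) (hΘmono : Monotone Θ)
    (hΘpos : ∀ p, 0 < Θ p) :
    ∃ C : ℝ, 0 < C ∧ ∀ ρ : EuclideanSpace ℝ (Fin d) → ℝ, Measurable ρ → ∀ x y,
      ∫⁻ z, ENNReal.ofReal (‖rieszKernel d (x - z) - rieszKernel d (y - z)‖ * ρ z)
        ≤ ENNReal.ofReal (C * phiTheta d Θ ‖x - y‖)
          * (yudNorm Θ ρ + ∫⁻ z, ENNReal.ofReal (ρ z)) := by
  obtain ⟨C₁, hC₁, h₁⟩ := exists_lintegral_rieszKernel_sub_le_of_lt_exp hd hΘmono hΘpos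
  obtain ⟨C₂, hC₂, h₂⟩ := exists_lintegral_rieszKernel_sub_le_of_exp_le hd hΘpos
  refine ⟨C₁ + C₂, by positivity, fun ρ hρ x y => ?_⟩
  have hφ := phiTheta_nonneg (d := d) (fun p => (hΘpos p).le) (norm_nonneg (x - y))
  obtain hxy | hxy := (norm_nonneg (x - y)).eq_or_lt
  · obtain rfl : x = y := sub_eq_zero.1 (norm_eq_zero.1 hxy.symm)
    simp
  obtain hr | hr := lt_or_ge ‖x - y‖ (exp (-((d : ℝ) + 1)))
  · exact (h₁ ρ hρ x y hxy hr).trans (by gcongr; linarith)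
  · exact (h₂ ρ hρ x y hr).trans (by gcongr; linarith)

end RieszIntegrals

/-- Mapping property of the Riesz kernel: for nonnegative
`ρ ∈ L¹(ℝ^d) ∩ Y^Θ_ul(ℝ^d)` one has
`∫ |K(x−z) − K(y−z)| ρ(z) dz ≤ C_d (‖ρ‖_{L¹} + ‖ρ‖_{Y^Θ_ul}) φ_Θ(|x−y|)`. -/
theorem stmt8 (d : ℕ) (hd : 2 ≤ d)
    (Θ : ℝ → ℝ) (hΘmono : Monotone Θ) (hΘpos : ∀ p, 0 < Θ p)
    (K : EuclideanSpace ℝ (Fin d) → EuclideanSpace ℝ (Fin d))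
    (hK : ∀ z, K z = (‖z‖ ^ d)⁻¹ • z) :
    ∃ C : ℝ, 0 < C ∧ ∀ ρ : EuclideanSpace ℝ (Fin d) → ℝ,
      Measurable ρ → Integrable ρ → (∀ z, 0 ≤ ρ z) →
      yudNorm Θ ρ < ⊤ →
      ∀ x y, (∫ z, ‖K (x - z) - K (y - z)‖ * ρ z)
        ≤ C * ((∫ z, ρ z) + (yudNorm Θ ρ).toReal) * phiTheta d Θ ‖x - y‖ := by
  obtain rfl : K = rieszKernel d := funext hK
  obtain ⟨C, hC, hbound⟩ := exists_lintegral_rieszKernel_sub_le hd hΘmono hΘpos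
  refine ⟨C, hC, fun ρ hρ hρint hρ0 hY x y => ?_⟩
  have hφ := phiTheta_nonneg (d := d) (fun p => (hΘpos p).le) (norm_nonneg (x - y))
  have hM : 0 ≤ ∫ z, ρ z := integral_nonneg hρ0
  rw [integral_eq_lintegral_of_nonneg_ae (ae_of_all _ fun z => mul_nonneg (norm_nonneg _) (hρ0 z))
    (by fun_prop : Measurable _).aestronglyMeasurable]
  refine ENNReal.toReal_le_of_le_ofReal (by positivity) ((hbound ρ hρ x y).trans_eq ?_)
  rw [show C * ((∫ z, ρ z) + (yudNorm Θ ρ).toReal) * phiTheta d Θ ‖x - y‖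
      = C * phiTheta d Θ ‖x - y‖ * ((yudNorm Θ ρ).toReal + ∫ z, ρ z) by ring,
    ENNReal.ofReal_mul (by positivity : 0 ≤ C * phiTheta d Θ ‖x - y‖),
    ENNReal.ofReal_add ENNReal.toReal_nonneg hM, ENNReal.ofReal_toReal hY.ne,
    ofReal_integral_eq_lintegral_ofReal hρint (ae_of_all _ hρ0)]
end

section
/- Let m ∈ ℕ and define Θ_m(p) = p·(log_1 p)²·(log_2 p)²⋯(log_m p)² for p ≥ exp_m(1), extended constantly below exp_m(1), where log_k denotes the k-fold iterated logarithm and exp_{m+1}(1) = e^{exp_m(1)}. Then the function Φ_{Θ_m}(t) = ∫₀ᵗ φ_{Θ_m}(s) ds, where φ_{Θ_m}(r) = r|log r|Θ_m(|log r|) for small r > 0, satisfies the second-order Osgood condition ∫_{0+} dt/√(Φ_{Θ_m}(t)) = +∞. -/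
open MeasureTheory Real Set Filter Topology

/-- Iterated logarithm: `itlog 0 = id`, `itlog 1 r = |log r|`,
`itlog (m+1) r = log (itlog m r)` for `m ≥ 1`. -/
noncomputable def itlog : ℕ → ℝ → ℝ
  | 0, r => r
  | 1, r => |Real.log r|
  | (n + 2), r => Real.log (itlog (n + 1) r)

/-- Iterated exponential: `expIter 0 = 1`, `expIter (m+1) = e^{expIter m}`. -/
noncomputable def expIter : ℕ → ℝ
  | 0 => 1
  | (n + 1) => Real.exp (expIter n)

/-- The iterated-logarithmic growth function
`Θ_m(p) = p (log₁ p)² (log₂ p)² ⋯ (log_m p)²` for `p ≥ exp_m(1)`,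
extended constantly below `exp_m(1)`. -/
noncomputable def ThetaM (m : ℕ) (p : ℝ) : ℝ :=
  if expIter m ≤ p then p * ∏ k ∈ Finset.range m, (itlog (k + 1) p) ^ 2
  else expIter m * ∏ k ∈ Finset.range m, (itlog (k + 1) (expIter m)) ^ 2

/-- The associated modulus `φ_{Θ_m}(r) = r |log r| Θ_m(|log r|)` for small `r > 0`,
extended continuously. -/
noncomputable def phiThetaM (m : ℕ) (r : ℝ) : ℝ :=
  if r ≤ 0 then 0
  else if r < Real.exp (-1) then r * |Real.log r| * ThetaM m |Real.log r|
  else Real.exp (-1) * ThetaM m 1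

/-!
Write `L = -log t` and `P(L) = L · log L ⋯ log^[m] L`. For `L` beyond `exp_{m+1}(1)` and
`2m + 2`, `φ(e^{-L}) = e^{-L} P(L)²`, and this decreases in `L`: each factor obeys
`log^[i] y / log^[i] x ≤ y / x`, so `P(y)² ≤ (y/x)^{2m+2} P(x)² ≤ e^{y-x} P(x)²`. Hence `φ`
increases near `0`, so `Φ(t) ≤ t φ(t) = (t P(-log t))²` and `1/√Φ(t) ≥ 1/(t P(-log t))`, which
is the derivative of `-log^[m+1](-log t)`; the latter tends to `-∞` as `t → 0⁺`.
-/

namespace Osgood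

lemma one_le_expIter : ∀ n, 1 ≤ expIter n
  | 0 => le_rfl
  | n + 1 => one_le_exp (zero_le_one.trans (one_le_expIter n))

lemma expIter_mono : Monotone expIter :=
  monotone_nat_of_le_succ fun _ => (le_add_of_nonneg_right zero_le_one).trans (add_one_le_exp _)

lemma expIter_le_iterate_log {i j : ℕ} {x : ℝ} (hx : expIter (j + i) ≤ x) :
    expIter j ≤ log^[i] x := by
  induction i generalizing x with
  | zero => simpa using hx
  | succ i ih =>
    rw [Function.iterate_succ_apply]
    exact ih ((le_log_iff_exp_le (one_pos.trans_le ((one_le_expIter _).trans hx))).2 hx)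

lemma one_le_iterate_log {i : ℕ} {x : ℝ} (hx : expIter i ≤ x) : 1 ≤ log^[i] x :=
  (one_le_expIter 0).trans (expIter_le_iterate_log (j := 0) (by rwa [zero_add]))

lemma iterate_log_le_iterate_log {i : ℕ} {x y : ℝ} (hx : expIter i ≤ x) (hxy : x ≤ y) :
    log^[i] x ≤ log^[i] y := by
  induction i generalizing x y with
  | zero => exact hxy
  | succ i ih =>
    have hx0 : 0 < x := one_pos.trans_le ((one_le_expIter _).trans hx)
    simp only [Function.iterate_succ_apply]
    exact ih (expIter_le_iterate_log (i := 1) hx) (log_le_log hx0 hxy)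

lemma mul_iterate_log_le {i : ℕ} {x y : ℝ} (hx : expIter (i + 1) ≤ x) (hxy : x ≤ y) :
    x * log^[i] y ≤ y * log^[i] x := by
  induction i generalizing x y with
  | zero => exact (mul_comm x y).le
  | succ i ih =>
    have he : exp 1 ≤ x := (exp_le_exp.2 (one_le_expIter _)).trans hx
    have hx0 : 0 < x := (exp_pos 1).trans_le he
    have hlogx : 1 ≤ log x := (le_log_iff_exp_le hx0).2 he
    have hlog : log y / y ≤ log x / x := log_div_self_antitoneOn he (he.trans hxy) hxy
    rw [div_le_div_iff₀ (hx0.trans_le hxy) hx0] at hlog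
    have hih : log x * log^[i] (log y) ≤ log y * log^[i] (log x) :=
      ih (expIter_le_iterate_log (i := 1) hx) (log_le_log hx0 hxy)
    have hB : 0 ≤ log^[i] (log x) :=
      zero_le_one.trans (one_le_iterate_log (expIter_le_iterate_log (i := 1)
        ((expIter_mono (Nat.le_succ _)).trans hx)))
    simp only [Function.iterate_succ_apply]
    refine le_of_mul_le_mul_left ?_ (zero_lt_one.trans_le hlogx)
    nlinarith [mul_le_mul_of_nonneg_left hih hx0.le, mul_le_mul_of_nonneg_right hlog hB]

lemma itlog_eq_iterate_log {x : ℝ} (hx : 1 ≤ x) : ∀ j, itlog j x = log^[j] x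
  | 0 => rfl
  | 1 => by simp [itlog, abs_of_nonneg (log_nonneg hx)]
  | j + 2 => by
    rw [itlog, itlog_eq_iterate_log hx (j + 1), Function.iterate_succ_apply' log (j + 1)]

noncomputable def iterLogProd (n : ℕ) (x : ℝ) : ℝ := ∏ i ∈ Finset.range n, log^[i] x

lemma hasDerivAt_iterate_log {n : ℕ} {x : ℝ} (hx : ∀ i < n, log^[i] x ≠ 0) :
    HasDerivAt log^[n] (iterLogProd n x)⁻¹ x := by
  induction n with
  | zero => simpa [iterLogProd] using hasDerivAt_id x
  | succ n ih =>
    have h := (ih fun i hi => hx i (hi.trans n.lt_succ_self)).log (hx n n.lt_succ_self)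
    rw [Function.iterate_succ', iterLogProd, Finset.prod_range_succ, mul_inv, ← div_eq_mul_inv]
    exact h

lemma one_le_iterLogProd {n : ℕ} {x : ℝ} (hx : expIter n ≤ x) : 1 ≤ iterLogProd n x :=
  Finset.one_le_prod fun _ hi =>
    one_le_iterate_log ((expIter_mono (Finset.mem_range.1 hi).le).trans hx)

lemma pow_mul_iterLogProd_le {n : ℕ} {x y : ℝ} (hx : expIter n ≤ x) (hxy : x ≤ y) :
    x ^ n * iterLogProd n y ≤ y ^ n * iterLogProd n x := by
  have hix : ∀ i ∈ Finset.range n, expIter (i + 1) ≤ x := fun i hi =>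
    (expIter_mono (Finset.mem_range.1 hi)).trans hx
  have hx0 : 0 ≤ x := zero_le_one.trans ((one_le_expIter n).trans hx)
  have hpow : ∀ z : ℝ, z ^ n = ∏ _i ∈ Finset.range n, z := by simp
  rw [iterLogProd, iterLogProd, hpow, hpow, ← Finset.prod_mul_distrib,
    ← Finset.prod_mul_distrib]
  exact Finset.prod_le_prod (fun i hi => mul_nonneg hx0 (zero_le_one.trans
      (one_le_iterate_log (((expIter_mono i.le_succ).trans (hix i hi)).trans hxy))))
    fun i hi => mul_iterate_log_le (hix i hi) hxy

lemma pow_mul_exp_neg_le {N : ℕ} {x y : ℝ} (hx : 0 < x) (hN : N ≤ x) (hxy : x ≤ y) :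
    y ^ N * exp (-y) ≤ x ^ N * exp (-x) := by
  have hratio : (y / x) ^ N ≤ exp (y - x) := calc
    (y / x) ^ N ≤ exp (y / x - 1) ^ N := by
      gcongr
      · exact div_nonneg (hx.le.trans hxy) hx.le
      · linarith [add_one_le_exp (y / x - 1)]
    _ = exp (N * (y / x - 1)) := by rw [← exp_nat_mul]
    _ ≤ exp (x * (y / x - 1)) := by
      gcongr
      rw [sub_nonneg, one_le_div hx]
      exact hxy
    _ = exp (y - x) := by field_simp
  rw [div_pow, div_le_iff₀ (by positivity)] at hratio
  calc y ^ N * exp (-y) ≤ exp (y - x) * x ^ N * exp (-y) := by gcongr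
    _ = x ^ N * exp (-x) := by rw [mul_comm (exp _), mul_assoc, ← exp_add]; ring_nf

lemma exp_neg_mul_iterLogProd_sq_le {n : ℕ} {x y : ℝ} (hx : expIter n ≤ x) (hn : 2 * n ≤ x)
    (hxy : x ≤ y) : exp (-y) * iterLogProd n y ^ 2 ≤ exp (-x) * iterLogProd n x ^ 2 := by
  have hx0 : 0 < x := one_pos.trans_le ((one_le_expIter n).trans hx)
  have hprod := pow_mul_iterLogProd_le hx hxy
  have hP : 0 ≤ iterLogProd n y := zero_le_one.trans (one_le_iterLogProd (hx.trans hxy))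
  have hsq : x ^ (2 * n) * iterLogProd n y ^ 2 ≤ y ^ (2 * n) * iterLogProd n x ^ 2 := by
    simpa only [pow_mul', ← mul_pow] using pow_le_pow_left₀ (by positivity) hprod 2
  have hexp := pow_mul_exp_neg_le (N := 2 * n) hx0 (by exact_mod_cast hn) hxy
  refine le_of_mul_le_mul_left ?_ (pow_pos hx0 (2 * n))
  calc x ^ (2 * n) * (exp (-y) * iterLogProd n y ^ 2)
      ≤ exp (-y) * (y ^ (2 * n) * iterLogProd n x ^ 2) := by
        rw [mul_left_comm]; gcongr
    _ = y ^ (2 * n) * exp (-y) * iterLogProd n x ^ 2 := by ring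
    _ ≤ x ^ (2 * n) * exp (-x) * iterLogProd n x ^ 2 := by gcongr
    _ = x ^ (2 * n) * (exp (-x) * iterLogProd n x ^ 2) := by ring

lemma tendsto_iterate_log_atTop (n : ℕ) : Tendsto log^[n] atTop atTop := by
  induction n with
  | zero => exact tendsto_id
  | succ n ih => exact Function.iterate_succ' log n ▸ tendsto_log_atTop.comp ih

lemma ThetaM_of_le {m : ℕ} {p : ℝ} (hp : expIter m ≤ p) :
    ThetaM m p = p * ∏ k ∈ Finset.range m, (log^[k + 1] p) ^ 2 := by
  rw [ThetaM, if_pos hp]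
  congr 1
  exact Finset.prod_congr rfl fun k _ => by
    rw [itlog_eq_iterate_log ((one_le_expIter m).trans hp)]

lemma mul_ThetaM_eq_iterLogProd_sq {m : ℕ} {p : ℝ} (hp : expIter m ≤ p) :
    p * ThetaM m p = iterLogProd (m + 1) p ^ 2 := by
  rw [ThetaM_of_le hp, iterLogProd, Finset.prod_range_succ', Finset.prod_pow]
  simp only [Function.iterate_zero_apply]
  ring

lemma ThetaM_max_expIter (m : ℕ) (p : ℝ) : ThetaM m (max p (expIter m)) = ThetaM m p := by
  rcases le_total (expIter m) p with hp | hp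
  · rw [max_eq_left hp]
  · rw [max_eq_right hp]
    by_cases hp' : expIter m ≤ p
    · rw [le_antisymm hp hp']
    · rw [ThetaM, if_pos le_rfl, ThetaM, if_neg hp']

lemma monotone_ThetaM (m : ℕ) : Monotone (ThetaM m) := by
  intro p q hpq
  rw [← ThetaM_max_expIter m p, ← ThetaM_max_expIter m q]
  have hp : expIter m ≤ max p (expIter m) := le_max_right _ _
  have hq : expIter m ≤ max q (expIter m) := le_max_right _ _
  rw [ThetaM_of_le hp, ThetaM_of_le hq]
  have hpq' : max p (expIter m) ≤ max q (expIter m) := max_le_max_right _ hpq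
  gcongr with k hk
  · exact zero_le_one.trans ((one_le_expIter m).trans hq)
  · exact zero_le_one.trans (one_le_iterate_log ((expIter_mono (Finset.mem_range.1 hk)).trans hp))
  · exact iterate_log_le_iterate_log ((expIter_mono (Finset.mem_range.1 hk)).trans hp) hpq'

lemma one_le_ThetaM (m : ℕ) (p : ℝ) : 1 ≤ ThetaM m p := by
  rw [← ThetaM_max_expIter, ThetaM_of_le (le_max_right _ _)]
  refine one_le_mul_of_one_le_of_one_le ((one_le_expIter m).trans (le_max_right _ _))
    (Finset.one_le_prod fun k hk => one_le_pow₀ (one_le_iterate_log ?_))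
  exact (expIter_mono (Finset.mem_range.1 hk)).trans (le_max_right _ _)

lemma phiThetaM_exp_neg {m : ℕ} {x : ℝ} (hx₁ : 1 < x) (hx : expIter m ≤ x) :
    phiThetaM m (exp (-x)) = exp (-x) * iterLogProd (m + 1) x ^ 2 := by
  rw [phiThetaM, if_neg (exp_pos _).not_ge, if_pos (exp_lt_exp.2 (neg_lt_neg hx₁)), log_exp,
    abs_neg, abs_of_pos (one_pos.trans hx₁), mul_assoc, mul_ThetaM_eq_iterLogProd_sq hx]

lemma phiThetaM_pos (m : ℕ) {r : ℝ} (hr : 0 < r) : 0 < phiThetaM m r := by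
  have hΘ : ∀ p, 0 < ThetaM m p := fun p => one_pos.trans_le (one_le_ThetaM m p)
  rw [phiThetaM, if_neg hr.not_ge]
  split_ifs with hre
  · have hr1 : r < 1 := hre.trans (exp_lt_one_iff.2 neg_one_lt_zero)
    exact mul_pos (mul_pos hr (abs_pos.2 (log_neg hr hr1).ne)) (hΘ _)
  · exact mul_pos (exp_pos _) (hΘ _)

lemma phiThetaM_nonneg (m : ℕ) (r : ℝ) : 0 ≤ phiThetaM m r := by
  rcases le_or_gt r 0 with hr | hr
  · rw [phiThetaM, if_pos hr]
  · exact (phiThetaM_pos m hr).le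

lemma measurable_itlog : ∀ j, Measurable (itlog j)
  | 0 => measurable_id
  | 1 => measurable_log.abs
  | j + 2 => measurable_log.comp (measurable_itlog (j + 1))

lemma measurable_phiThetaM (m : ℕ) : Measurable (phiThetaM m) := by
  have hΘ : Measurable (ThetaM m) :=
    Measurable.ite (measurableSet_le measurable_const measurable_id)
      (measurable_id.mul
        (Finset.measurable_prod _ fun k _ => (measurable_itlog (k + 1)).pow_const 2))
      measurable_const
  refine Measurable.ite (measurableSet_le measurable_id measurable_const) measurable_const
    (Measurable.ite (measurableSet_lt measurable_id measurable_const) ?_ measurable_const)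
  exact (measurable_id.mul measurable_log.abs).mul (hΘ.comp measurable_log.abs)

lemma phiThetaM_le_of_exp_neg_le {m : ℕ} {T r : ℝ} (hT : 1 ≤ T) (hr : exp (-T) ≤ r) :
    phiThetaM m r ≤ T * ThetaM m T := by
  have hr0 : 0 < r := (exp_pos _).trans_le hr
  have hΘ : 0 ≤ ThetaM m T := zero_le_one.trans (one_le_ThetaM m T)
  rw [phiThetaM, if_neg hr0.not_ge]
  split_ifs with hre
  · have hlog : log r < 0 := log_neg hr0 (hre.trans (exp_lt_one_iff.2 neg_one_lt_zero))
    have hL : |log r| ≤ T := by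
      rw [abs_of_neg hlog, neg_le]
      simpa using log_le_log (exp_pos _) hr
    calc r * |log r| * ThetaM m |log r| ≤ 1 * T * ThetaM m T := by
          gcongr
          · exact zero_le_one.trans (one_le_ThetaM m _)
          · exact hre.le.trans (exp_le_one_iff.2 (by norm_num))
          · exact monotone_ThetaM m hL
      _ = T * ThetaM m T := by rw [one_mul]
  · calc exp (-1) * ThetaM m 1 ≤ 1 * ThetaM m T := by
          gcongr
          · exact zero_le_one.trans (one_le_ThetaM m 1)
          · exact exp_le_one_iff.2 (by norm_num)
          · exact monotone_ThetaM m hT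
      _ ≤ T * ThetaM m T := by gcongr

lemma le_neg_log_of_le_exp_neg {T t : ℝ} (ht : 0 < t) (htT : t ≤ exp (-T)) : T ≤ -log t := by
  linarith [log_le_log ht htT, log_exp (-T)]

lemma phiThetaM_le_phiThetaM {m : ℕ} {T s t : ℝ} (hT : expIter (m + 1) ≤ T)
    (hT' : 2 * ((m + 1 : ℕ) : ℝ) ≤ T) (hs : 0 < s) (hst : s ≤ t) (htT : t ≤ exp (-T)) :
    phiThetaM m s ≤ phiThetaM m t := by
  have hT1 : 1 < T := by push_cast at hT'; linarith [(m.cast_nonneg : (0 : ℝ) ≤ m)]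
  have hLt : T ≤ -log t := le_neg_log_of_le_exp_neg (hs.trans_le hst) htT
  have hLs : -log t ≤ -log s := neg_le_neg (log_le_log hs hst)
  have hm : expIter m ≤ T := (expIter_mono m.le_succ).trans hT
  rw [← exp_log hs, ← exp_log (hs.trans_le hst), ← neg_neg (log s), ← neg_neg (log t),
    phiThetaM_exp_neg (hT1.trans_le (hLt.trans hLs)) (hm.trans (hLt.trans hLs)),
    phiThetaM_exp_neg (hT1.trans_le hLt) (hm.trans hLt)]
  exact exp_neg_mul_iterLogProd_sq_le (hT.trans hLt) (hT'.trans hLt) hLs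

lemma phiThetaM_le {m : ℕ} {T : ℝ} (hT : expIter (m + 1) ≤ T)
    (hT' : 2 * ((m + 1 : ℕ) : ℝ) ≤ T) (r : ℝ) : phiThetaM m r ≤ T * ThetaM m T := by
  have hT1 : 1 ≤ T := (one_le_expIter _).trans hT
  rcases le_or_gt r 0 with hr | hr
  · rw [phiThetaM, if_pos hr]
    exact mul_nonneg (zero_le_one.trans hT1) (zero_le_one.trans (one_le_ThetaM m T))
  rcases le_total r (exp (-T)) with hrT | hrT
  · exact (phiThetaM_le_phiThetaM hT hT' hr hrT le_rfl).trans
      (phiThetaM_le_of_exp_neg_le hT1 le_rfl)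
  · exact phiThetaM_le_of_exp_neg_le hT1 hrT

lemma intervalIntegrable_phiThetaM (m : ℕ) (a b : ℝ) :
    IntervalIntegrable (phiThetaM m) volume a b := by
  set T : ℝ := max (expIter (m + 1)) (2 * ((m + 1 : ℕ) : ℝ))
  rw [intervalIntegrable_iff]
  refine Measure.integrableOn_of_bounded (M := T * ThetaM m T) measure_Ioc_lt_top.ne
    (measurable_phiThetaM m).aestronglyMeasurable (ae_of_all _ fun r => ?_)
  rw [norm_of_nonneg (phiThetaM_nonneg m r)]
  exact phiThetaM_le (le_max_left _ _) (le_max_right _ _) r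

lemma continuous_integral_phiThetaM (m : ℕ) :
    Continuous fun t => ∫ s in (0 : ℝ)..t, phiThetaM m s :=
  intervalIntegral.continuous_primitive (intervalIntegrable_phiThetaM m) 0

lemma integral_phiThetaM_pos (m : ℕ) {t : ℝ} (ht : 0 < t) :
    0 < ∫ s in (0 : ℝ)..t, phiThetaM m s :=
  intervalIntegral.intervalIntegral_pos_of_pos_on (intervalIntegrable_phiThetaM m 0 t)
    (fun _ hs => phiThetaM_pos m hs.1) ht

lemma integral_phiThetaM_le {m : ℕ} {T t : ℝ} (hT : expIter (m + 1) ≤ T)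
    (hT' : 2 * ((m + 1 : ℕ) : ℝ) ≤ T) (ht : 0 < t) (htT : t ≤ exp (-T)) :
    ∫ s in (0 : ℝ)..t, phiThetaM m s ≤ (t * iterLogProd (m + 1) (-log t)) ^ 2 := by
  have hL : T ≤ -log t := le_neg_log_of_le_exp_neg ht htT
  have hφt : phiThetaM m t = t * iterLogProd (m + 1) (-log t) ^ 2 := by
    have h1 : 1 < -log t := by push_cast at hT'; linarith [(m.cast_nonneg : (0 : ℝ) ≤ m)]
    conv_lhs => rw [← exp_log ht, ← neg_neg (log t)]
    rw [phiThetaM_exp_neg h1 ((expIter_mono m.le_succ).trans (hT.trans hL)), neg_neg, exp_log ht]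
  have hmono : ∀ s ∈ Icc 0 t, phiThetaM m s ≤ phiThetaM m t := by
    rintro s ⟨hs0, hst⟩
    rcases hs0.eq_or_lt with rfl | hs0
    · rw [phiThetaM, if_pos le_rfl]
      exact phiThetaM_nonneg m t
    · exact phiThetaM_le_phiThetaM hT hT' hs0 hst htT
  calc ∫ s in (0 : ℝ)..t, phiThetaM m s ≤ ∫ _ in (0 : ℝ)..t, phiThetaM m t :=
        intervalIntegral.integral_mono_on ht.le (intervalIntegrable_phiThetaM m 0 t)
          intervalIntegrable_const hmono
    _ = (t * iterLogProd (m + 1) (-log t)) ^ 2 := by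
        rw [intervalIntegral.integral_const, hφt, smul_eq_mul]
        ring

lemma hasDerivAt_neg_iterate_log_neg_log {n : ℕ} {T t : ℝ} (hT : expIter n ≤ T) (ht : 0 < t)
    (htT : t ≤ exp (-T)) :
    HasDerivAt (fun x => -log^[n] (-log x)) ((t * iterLogProd n (-log t))⁻¹) t := by
  have hL : expIter n ≤ -log t := hT.trans (le_neg_log_of_le_exp_neg ht htT)
  have hne : ∀ i < n, log^[i] (-log t) ≠ 0 := fun i hi =>
    (one_pos.trans_le (one_le_iterate_log ((expIter_mono hi.le).trans hL))).ne'
  refine ((hasDerivAt_iterate_log hne).comp t (hasDerivAt_log ht.ne').neg).neg.congr_deriv ?_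
  rw [mul_inv, mul_neg, neg_neg, mul_comm]

lemma iterate_log_neg_log_sub_le_integral {m : ℕ} {T a : ℝ} (hT : expIter (m + 1) ≤ T)
    (hT' : 2 * ((m + 1 : ℕ) : ℝ) ≤ T) (ha : 0 < a) (haT : a ≤ exp (-T)) :
    log^[m + 1] (-log a) - log^[m + 1] T ≤
      ∫ t in a..exp (-1), (√(∫ s in (0 : ℝ)..t, phiThetaM m s))⁻¹ := by
  set G : ℝ → ℝ := fun t => (√(∫ s in (0 : ℝ)..t, phiThetaM m s))⁻¹
  have hT1 : 1 ≤ T := (one_le_expIter _).trans hT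
  have hTe : exp (-T) ≤ exp (-1) := exp_le_exp.2 (neg_le_neg hT1)
  have hG : ContinuousOn G (Icc a (exp (-1))) :=
    (continuous_sqrt.comp (continuous_integral_phiThetaM m)).continuousOn.inv₀ fun t ht =>
      (sqrt_pos.2 (integral_phiThetaM_pos m (ha.trans_le ht.1))).ne'
  have hderiv : ∀ t ∈ Icc a (exp (-T)), HasDerivAt (fun x => -log^[m + 1] (-log x))
      ((t * iterLogProd (m + 1) (-log t))⁻¹) t := fun t ht =>
    hasDerivAt_neg_iterate_log_neg_log hT (ha.trans_le ht.1) ht.2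
  have hbound : ∀ t ∈ Ioo a (exp (-T)), (t * iterLogProd (m + 1) (-log t))⁻¹ ≤ G t := by
    rintro t ⟨hat, htT⟩
    have ht : 0 < t := ha.trans hat
    have hP : 0 ≤ t * iterLogProd (m + 1) (-log t) := mul_nonneg ht.le (zero_le_one.trans
      (one_le_iterLogProd (hT.trans (le_neg_log_of_le_exp_neg ht htT.le))))
    exact inv_anti₀ (sqrt_pos.2 (integral_phiThetaM_pos m ht))
      ((sqrt_le_left hP).2 (integral_phiThetaM_le hT hT' ht htT.le))
  calc log^[m + 1] (-log a) - log^[m + 1] T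
      = -log^[m + 1] (-log (exp (-T))) - -log^[m + 1] (-log a) := by
        rw [log_exp, neg_neg]; ring
    _ ≤ ∫ t in a..exp (-T), G t :=
        intervalIntegral.sub_le_integral_of_hasDeriv_right_of_le haT
          (fun t ht => (hderiv t ht).continuousAt.continuousWithinAt)
          (fun t ht => (hderiv t (Ioo_subset_Icc_self ht)).hasDerivWithinAt)
          ((hG.mono (Icc_subset_Icc_right hTe)).integrableOn_compact isCompact_Icc) hbound
    _ ≤ ∫ t in a..exp (-1), G t :=
        intervalIntegral.integral_mono_interval le_rfl haT hTe
          (ae_of_all _ fun t => inv_nonneg.2 (sqrt_nonneg _))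
          (hG.intervalIntegrable_of_Icc (haT.trans hTe))

end Osgood

open Osgood

/-- `Φ_{Θ_m}(t) = ∫₀ᵗ φ_{Θ_m}` satisfies the second-order Osgood condition
`∫_{0+} dt/√(Φ_{Θ_m}(t)) = +∞`. -/
theorem stmt14 (m : ℕ) :
    Tendsto
      (fun a : ℝ =>
        ∫ t in a..Real.exp (-1),
          (Real.sqrt (∫ s in (0:ℝ)..t, phiThetaM m s))⁻¹)
      (𝓝[>] (0:ℝ)) atTop := by
  set T : ℝ := max (expIter (m + 1)) (2 * ((m + 1 : ℕ) : ℝ))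
  have hlim : Tendsto (fun a => log^[m + 1] (-log a) - log^[m + 1] T) (𝓝[>] 0) atTop := by
    simpa only [sub_eq_add_neg, Function.comp_def] using tendsto_atTop_add_const_right _ _
      ((tendsto_iterate_log_atTop (m + 1)).comp
        (tendsto_neg_atBot_atTop.comp tendsto_log_nhdsGT_zero))
  refine tendsto_atTop_mono' _ ?_ hlim
  filter_upwards [Ioc_mem_nhdsGT (exp_pos (-T))] with a ha
  exact iterate_log_neg_log_sub_le_integral (le_max_left _ _) (le_max_right _ _) ha.1 ha.2
end

section
/- Let d ≥ 2 and let K(x,y) be a measurable antisymmetric kernel (K(x,y) = −K(y,x)). Let μ₁, μ₂ ∈ P₁(ℝ^{2d}) with densities f₁, f₂, let π ∈ Plan(μ₁, μ₂) be a coupling, and suppose ∫ |K(h, X₁(o)) − K(h, X₂(o'))| ρ₂(h) dh ≤ φ(|X₁(o) − X₂(o')|) for all o, o' where ρ₂ is a nonnegative density with ∫ρ₂ = 1 and X₁, X₂ : ℝ^{2d} → ℝ^d are measurable. Then ∫∫ |∫ K(X₂(q), X₁(o)) dμ₁(o) − ∫ K(X₂(q), X₂(o')) dμ₂(o')| dπ(p,q)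 ≤ ∫∫ φ(|X₁(o) − X₂(o')|) dπ(o,o'), where the outer integral over q uses that (X₂)_#(second marginal) has density ρ₂. -/
open MeasureTheory

/-!
Write `F(h) = ∫ K(h, X₁) dμ₁ − ∫ K(h, X₂) dμ₂`. Since `μ₁, μ₂` are the marginals of `P`,
`F(h) = ∫ (K(h, X₁ o) − K(h, X₂ o')) dP(o, o')`, so `|F(h)|` is at most the `P`-average of
`|K(h, X₁ o) − K(h, X₂ o')|`. Integrating `h = X₂(q)` against `P` means integrating `h` against
`(X₂)_# μ₂ = ρ₂ dh`; after exchanging the two integrals, the hypothesis on `φ` bounds the inner one.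
Antisymmetry of `K` turns integrability of `K(h, X₂ ·)` against `μ₂` into integrability of
`K(·, x)` against `(X₂)_# μ₂`, so that the hypothesis on `φ`, a Bochner integral, really bounds
the inner integral.
-/

section Coupling

variable {α β H E : Type*} [MeasurableSpace α] [MeasurableSpace β] [MeasurableSpace H]
  [NormedAddCommGroup E]

theorem integrable_kernel_fst_map_of_antisymm {μ : Measure β} {K : H → H → E}
    (hK : StronglyMeasurable (Function.uncurry K)) (hanti : ∀ x y, K x y = -K y x) {X : β → H}
    (hX : Measurable X) {x : H} (hKx : Integrable (fun y => K x (X y)) μ) :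
    Integrable (fun h => K h x) (μ.map X) := by
  have hmap : Integrable (K x) (μ.map X) :=
    (integrable_map_measure
      (hK.comp_measurable (measurable_const.prodMk measurable_id)).aestronglyMeasurable
      hX.aemeasurable).mpr hKx
  rw [show (fun h => K h x) = -K x from funext fun h => hanti h x]
  exact hmap.neg

variable [NormedSpace ℝ E]

theorem enorm_integral_sub_integral_le_lintegral_coupling (P : Measure (α × β)) {f : α → E}
    {g : β → E} (hf : Integrable f (P.map Prod.fst)) (hg : Integrable g (P.map Prod.snd)) :
    ‖∫ x, f x ∂P.map Prod.fst - ∫ y, g y ∂P.map Prod.snd‖ₑ ≤ ∫⁻ z, ‖f z.1 - g z.2‖ₑ ∂P := by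
  have hf' : Integrable (fun z : α × β => f z.1) P :=
    hf.comp_aemeasurable measurable_fst.aemeasurable
  have hg' : Integrable (fun z : α × β => g z.2) P :=
    hg.comp_aemeasurable measurable_snd.aemeasurable
  rw [integral_map measurable_fst.aemeasurable hf.aestronglyMeasurable,
    integral_map measurable_snd.aemeasurable hg.aestronglyMeasurable, ← integral_sub hf' hg']
  exact enorm_integral_le_lintegral_enorm _

theorem lintegral_enorm_integral_kernel_sub_le (P : Measure (α × β)) [SFinite P]
    {K : H → H → E} (hK : StronglyMeasurable (Function.uncurry K)) {X₁ : α → H} {X₂ : β → H}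
    (hX₁ : Measurable X₁) (hX₂ : Measurable X₂)
    (hK₁ : ∀ h, Integrable (fun x => K h (X₁ x)) (P.map Prod.fst))
    (hK₂ : ∀ h, Integrable (fun y => K h (X₂ y)) (P.map Prod.snd)) :
    ∫⁻ z, ‖∫ x, K (X₂ z.2) (X₁ x) ∂P.map Prod.fst - ∫ y, K (X₂ z.2) (X₂ y) ∂P.map Prod.snd‖ₑ ∂P
      ≤ ∫⁻ z, ∫⁻ h, ‖K h (X₁ z.1) - K h (X₂ z.2)‖ₑ ∂(P.map Prod.snd).map X₂ ∂P := by
  have hdiff : StronglyMeasurable fun p : H × (α × β) => K p.1 (X₁ p.2.1) - K p.1 (X₂ p.2.2) :=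
    .sub (hK.comp_measurable (measurable_fst.prodMk (hX₁.comp measurable_snd.fst)))
      (hK.comp_measurable (measurable_fst.prodMk (hX₂.comp measurable_snd.snd)))
  calc ∫⁻ z, ‖∫ x, K (X₂ z.2) (X₁ x) ∂P.map Prod.fst
          - ∫ y, K (X₂ z.2) (X₂ y) ∂P.map Prod.snd‖ₑ ∂P
      ≤ ∫⁻ z, ∫⁻ w, ‖K (X₂ z.2) (X₁ w.1) - K (X₂ z.2) (X₂ w.2)‖ₑ ∂P ∂P :=
        lintegral_mono fun z =>
          enorm_integral_sub_integral_le_lintegral_coupling P (hK₁ _) (hK₂ _)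
    _ = ∫⁻ h, ∫⁻ w, ‖K h (X₁ w.1) - K h (X₂ w.2)‖ₑ ∂P ∂(P.map Prod.snd).map X₂ := by
        rw [Measure.map_map hX₂ measurable_snd,
          lintegral_map hdiff.enorm.lintegral_prod_right' (hX₂.comp measurable_snd)]
        rfl
    _ = ∫⁻ w, ∫⁻ h, ‖K h (X₁ w.1) - K h (X₂ w.2)‖ₑ ∂(P.map Prod.snd).map X₂ ∂P :=
        lintegral_lintegral_swap hdiff.enorm.aemeasurable

theorem integral_withDensity_ofReal_eq_integral_smul {μ : Measure H} {ρ : H → ℝ}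
    (hρ : Measurable ρ) (hρnn : ∀ h, 0 ≤ ρ h) (g : H → E) :
    ∫ h, g h ∂μ.withDensity (fun h => ENNReal.ofReal (ρ h)) = ∫ h, ρ h • g h ∂μ := by
  rw [integral_withDensity_eq_integral_toReal_smul hρ.ennreal_ofReal
    (ae_of_all _ fun _ => ENNReal.ofReal_lt_top)]
  simp only [ENNReal.toReal_ofReal (hρnn _)]

end Coupling

theorem stmt19_general (d : ℕ)
    (K : EuclideanSpace ℝ (Fin d) → EuclideanSpace ℝ (Fin d) → EuclideanSpace ℝ (Fin d))
    (hKmeas : Measurable (fun q : EuclideanSpace ℝ (Fin d) × EuclideanSpace ℝ (Fin d) =>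
      K q.1 q.2))
    (hKanti : ∀ x y, K x y = - K y x)
    (μ₁ μ₂ : Measure (EuclideanSpace ℝ (Fin d) × EuclideanSpace ℝ (Fin d)))
    (P : Measure ((EuclideanSpace ℝ (Fin d) × EuclideanSpace ℝ (Fin d)) ×
      (EuclideanSpace ℝ (Fin d) × EuclideanSpace ℝ (Fin d))))
    [IsProbabilityMeasure P]
    (hP₁ : P.map Prod.fst = μ₁) (hP₂ : P.map Prod.snd = μ₂)
    (X₁ X₂ : EuclideanSpace ℝ (Fin d) × EuclideanSpace ℝ (Fin d) → EuclideanSpace ℝ (Fin d))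
    (hX₁ : Measurable X₁) (hX₂ : Measurable X₂)
    (ρ₂ : EuclideanSpace ℝ (Fin d) → ℝ) (hρmeas : Measurable ρ₂)
    (hρnn : ∀ h, 0 ≤ ρ₂ h)
    (hpush : μ₂.map X₂ = volume.withDensity (fun h => ENNReal.ofReal (ρ₂ h)))
    (φ : ℝ → ℝ)
    (hK₁int : ∀ h, Integrable (fun o => K h (X₁ o)) μ₁)
    (hK₂int : ∀ h, Integrable (fun o' => K h (X₂ o')) μ₂)
    (hφint : Integrable (fun oo' => φ ‖X₁ oo'.1 - X₂ oo'.2‖) P)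
    (hkey : ∀ o o', (∫ h, ‖K h (X₁ o) - K h (X₂ o')‖ * ρ₂ h)
      ≤ φ ‖X₁ o - X₂ o'‖) :
    (∫ pq, ‖(∫ o, K (X₂ pq.2) (X₁ o) ∂μ₁) - ∫ o', K (X₂ pq.2) (X₂ o') ∂μ₂‖ ∂P)
      ≤ ∫ oo', φ ‖X₁ oo'.1 - X₂ oo'.2‖ ∂P := by
  subst hP₁ hP₂
  have hK : StronglyMeasurable (Function.uncurry K) := hKmeas.stronglyMeasurable
  have hkey_pushforward : ∀ o o', ∫⁻ h, ‖K h (X₁ o) - K h (X₂ o')‖ₑ ∂(P.map Prod.snd).map X₂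
      ≤ ENNReal.ofReal (φ ‖X₁ o - X₂ o'‖) := fun o o' => by
    have hint : Integrable (fun h => K h (X₁ o) - K h (X₂ o')) ((P.map Prod.snd).map X₂) :=
      (integrable_kernel_fst_map_of_antisymm hK hKanti hX₂ (hK₂int _)).sub
        (integrable_kernel_fst_map_of_antisymm hK hKanti hX₂ (hK₂int _))
    rw [← ofReal_integral_norm_eq_lintegral_enorm hint,
      hpush, integral_withDensity_ofReal_eq_integral_smul hρmeas hρnn]
    simpa only [smul_eq_mul, mul_comm] using ENNReal.ofReal_le_ofReal (hkey o o')
  have hφnn : ∀ o o', 0 ≤ φ ‖X₁ o - X₂ o'‖ := fun o o' =>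
    (integral_nonneg fun h => mul_nonneg (norm_nonneg _) (hρnn h)).trans (hkey o o')
  have hF : StronglyMeasurable fun h => (∫ o, K h (X₁ o) ∂P.map Prod.fst)
      - ∫ o', K h (X₂ o') ∂P.map Prod.snd :=
    .sub
      (hK.comp_measurable (measurable_fst.prodMk (hX₁.comp measurable_snd))).integral_prod_right'
      (hK.comp_measurable (measurable_fst.prodMk (hX₂.comp measurable_snd))).integral_prod_right'
  have hlhs_meas : AEStronglyMeasurable (fun pq => (∫ o, K (X₂ pq.2) (X₁ o) ∂P.map Prod.fst)
      - ∫ o', K (X₂ pq.2) (X₂ o') ∂P.map Prod.snd) P :=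
    (hF.comp_measurable (hX₂.comp measurable_snd)).aestronglyMeasurable
  have hrhs_lintegral : ∫ z, φ ‖X₁ z.1 - X₂ z.2‖ ∂P
      = (∫⁻ z, ENNReal.ofReal (φ ‖X₁ z.1 - X₂ z.2‖) ∂P).toReal :=
    integral_eq_lintegral_of_nonneg_ae (ae_of_all _ fun z => hφnn z.1 z.2)
      hφint.aestronglyMeasurable
  rw [integral_norm_eq_lintegral_enorm hlhs_meas, hrhs_lintegral]
  exact ENNReal.toReal_mono hφint.lintegral_lt_top.ne <|
    (lintegral_enorm_integral_kernel_sub_le P hK hX₁ hX₂ hK₁int hK₂int).trans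
      (lintegral_mono fun z => hkey_pushforward z.1 z.2)

/-- Key coupling estimate in the Lagrangian stability proof: for an antisymmetric
kernel `K`, probability measures `μ₁, μ₂` coupled by `P ∈ Plan(μ₁,μ₂)`, maps
`X₁, X₂` with `(X₂)_# μ₂` of density `ρ₂`, and a nondecreasing `φ` controlling
`∫ |K(h, X₁(o)) − K(h, X₂(o'))| ρ₂(h) dh ≤ φ(|X₁(o) − X₂(o')|)`, one has
`∬ |∫ K(X₂(q), X₁(o)) dμ₁(o) − ∫ K(X₂(q), X₂(o')) dμ₂(o')| dP(p,q)
  ≤ ∬ φ(|X₁(o) − X₂(o')|) dP(o,o')`. -/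
theorem stmt19 (d : ℕ) (hd : 2 ≤ d)
    (K : EuclideanSpace ℝ (Fin d) → EuclideanSpace ℝ (Fin d) → EuclideanSpace ℝ (Fin d))
    (hKmeas : Measurable (fun q : EuclideanSpace ℝ (Fin d) × EuclideanSpace ℝ (Fin d) =>
      K q.1 q.2))
    (hKanti : ∀ x y, K x y = - K y x)
    (μ₁ μ₂ : Measure (EuclideanSpace ℝ (Fin d) × EuclideanSpace ℝ (Fin d)))
    [IsProbabilityMeasure μ₁] [IsProbabilityMeasure μ₂]
    (P : Measure ((EuclideanSpace ℝ (Fin d) × EuclideanSpace ℝ (Fin d)) ×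
      (EuclideanSpace ℝ (Fin d) × EuclideanSpace ℝ (Fin d))))
    [IsProbabilityMeasure P]
    (hP₁ : P.map Prod.fst = μ₁) (hP₂ : P.map Prod.snd = μ₂)
    (X₁ X₂ : EuclideanSpace ℝ (Fin d) × EuclideanSpace ℝ (Fin d) → EuclideanSpace ℝ (Fin d))
    (hX₁ : Measurable X₁) (hX₂ : Measurable X₂)
    (ρ₂ : EuclideanSpace ℝ (Fin d) → ℝ) (hρmeas : Measurable ρ₂)
    (hρnn : ∀ h, 0 ≤ ρ₂ h) (hρint : Integrable ρ₂) (hρmass : (∫ h, ρ₂ h) = 1)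
    (hpush : μ₂.map X₂ = volume.withDensity (fun h => ENNReal.ofReal (ρ₂ h)))
    (φ : ℝ → ℝ) (hφmono : Monotone φ) (hφnn : ∀ r, 0 ≤ φ r)
    (hK₁int : ∀ h, Integrable (fun o => K h (X₁ o)) μ₁)
    (hK₂int : ∀ h, Integrable (fun o' => K h (X₂ o')) μ₂)
    (hφint : Integrable (fun oo' => φ ‖X₁ oo'.1 - X₂ oo'.2‖) P)
    (hkey : ∀ o o', (∫ h, ‖K h (X₁ o) - K h (X₂ o')‖ * ρ₂ h)
      ≤ φ ‖X₁ o - X₂ o'‖) :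
    (∫ pq, ‖(∫ o, K (X₂ pq.2) (X₁ o) ∂μ₁) - ∫ o', K (X₂ pq.2) (X₂ o') ∂μ₂‖ ∂P)
      ≤ ∫ oo', φ ‖X₁ oo'.1 - X₂ oo'.2‖ ∂P :=
  stmt19_general d K hKmeas hKanti μ₁ μ₂ P hP₁ hP₂ X₁ X₂ hX₁ hX₂ ρ₂ hρmeas hρnn hpush φ hK₁int
    hK₂int hφint hkey
end
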